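/- arXiv:2412.03437 — 4 statements merged into one kernel-verified Lean document; each statement's English description precedes it below -/
import Mathlib

section
/- Let n ≥ 3. There do not exist finitely many vectors β₁, …, β_k ∈ ℝ^n such that for every v ∈ ℝ^n, max_{1 ≤ i ≤ n} |v_i| = Σ_{j=1}^k |⟨β_j, v⟩|. In other words, the supremum norm ‖·‖_∞ on ℝ^n (whose unit ball is the cube [−1,1]^n) cannot be written as a finite sum of absolute values of linear functionals. -/
/-!
Every norm of the form `v ↦ ∑ j |φ_j v|` with additive `φ_j` satisfies Hlawka's inequality
`N(x+y) + N(y+z) + N(z+x) ≤ N x + N y + N z + N(x+y+z)`, because the absolute value on `ℝ` does.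
The sup norm violates it as soon as there are three coordinates: for `x = e₁ + e₂`, `y = e₂ + e₃`,
`z = e₃ + e₁` the left side is `2 + 2 + 2 = 6`, the right side `1 + 1 + 1 + 2 = 5`.
-/

open Finset

theorem abs_hlawka (a b c : ℝ) :
    |a + b| + |b + c| + |c + a| ≤ |a| + |b| + |c| + |a + b + c| := by
  rcases abs_cases a with ⟨h1, _⟩ | ⟨h1, _⟩ <;>
  rcases abs_cases b with ⟨h2, _⟩ | ⟨h2, _⟩ <;>
  rcases abs_cases c with ⟨h3, _⟩ | ⟨h3, _⟩ <;>
  rcases abs_cases (a + b) with ⟨h4, _⟩ | ⟨h4, _⟩ <;>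
  rcases abs_cases (b + c) with ⟨h5, _⟩ | ⟨h5, _⟩ <;>
  rcases abs_cases (c + a) with ⟨h6, _⟩ | ⟨h6, _⟩ <;>
  rcases abs_cases (a + b + c) with ⟨h7, _⟩ | ⟨h7, _⟩ <;>
  linarith

theorem sum_abs_hlawka {ι E : Type*} [AddCommMonoid E]
    (s : Finset ι) (φ : ι → E →+ ℝ) (x y z : E) :
    ∑ j ∈ s, |φ j (x + y)| + ∑ j ∈ s, |φ j (y + z)| + ∑ j ∈ s, |φ j (z + x)| ≤
      ∑ j ∈ s, |φ j x| + ∑ j ∈ s, |φ j y| + ∑ j ∈ s, |φ j z| + ∑ j ∈ s, |φ j (x + y + z)| := by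
  simp only [← sum_add_distrib, map_add]
  exact sum_le_sum fun j _ ↦ abs_hlawka _ _ _

namespace EuclideanSpace

variable {ι : Type*} [DecidableEq ι] {a b c : ι}

noncomputable def single₃ (a b c : ι) (p q r : ℝ) : EuclideanSpace ℝ ι :=
  single a p + single b q + single c r

theorem single₃_add (p q r p' q' r' : ℝ) :
    single₃ a b c p q r + single₃ a b c p' q' r' = single₃ a b c (p + p') (q + q') (r + r') := by
  simp only [single₃, PiLp.single_add]
  abel

theorem single₃_apply (p q r : ℝ) (i : ι) :
    single₃ a b c p q r i =
      (if i = a then p else 0) + (if i = b then q else 0) + (if i = c then r else 0) := by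
  simp [single₃, PiLp.single_apply]

theorem iSup_abs_single₃ [Finite ι] (hab : a ≠ b) (hac : a ≠ c) (hbc : b ≠ c) (p q r : ℝ) :
    ⨆ i, |single₃ a b c p q r i| = max |p| (max |q| |r|) := by
  have : Nonempty ι := ⟨a⟩
  have hbdd : BddAbove (Set.range fun i ↦ |single₃ a b c p q r i|) := (Set.finite_range _).bddAbove
  refine le_antisymm (ciSup_le fun i ↦ ?_) (max_le ?_ (max_le ?_ ?_))
  · rw [single₃_apply]
    by_cases ha : i = a <;> by_cases hb : i = b <;> by_cases hc : i = c <;> subst_vars <;>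
      simp_all
  · simpa [single₃_apply, hab, hac] using le_ciSup hbdd a
  · simpa [single₃_apply, hab.symm, hbc] using le_ciSup hbdd b
  · simpa [single₃_apply, hac.symm, hbc.symm] using le_ciSup hbdd c

end EuclideanSpace

open EuclideanSpace in
/-- for `n ≥ 3`, the supremum norm `v ↦ max_i |v i|` on `ℝ^n` cannot be
written as a finite sum of absolute values of linear functionals `∑ j |⟨β j, v⟩|`. -/
theorem sup_norm_not_sum_abs_inner (n : ℕ) (hn : 3 ≤ n) :
    ¬ ∃ (k : ℕ) (β : Fin k → EuclideanSpace ℝ (Fin n)),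
        ∀ v : EuclideanSpace ℝ (Fin n),
          (⨆ i : Fin n, |v i|) = ∑ j, |(inner ℝ (β j) v : ℝ)| := by
  rintro ⟨k, β, hβ⟩
  let a : Fin n := ⟨0, by omega⟩
  let b : Fin n := ⟨1, by omega⟩
  let c : Fin n := ⟨2, by omega⟩
  have hab : a ≠ b := by simp [a, b, Fin.ext_iff]
  have hac : a ≠ c := by simp [a, c, Fin.ext_iff]
  have hbc : b ≠ c := by simp [b, c, Fin.ext_iff]
  have hlawka := sum_abs_hlawka univ
    (fun j ↦ (innerₛₗ ℝ (β j)).toAddMonoidHom)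
    (single₃ a b c 1 1 0) (single₃ a b c 0 1 1) (single₃ a b c 1 0 1)
  simp only [LinearMap.toAddMonoidHom_coe, innerₛₗ_apply_apply, single₃_add, ← hβ,
    iSup_abs_single₃ hab hac hbc] at hlawka
  norm_num at hlawka
end

section
/- Let ‖·‖ be a norm on ℝ² whose closed unit ball equals the convex hull of a finite set of points all of whose coordinates are rational. Then there exist finitely many vectors β₁, …, β_m ∈ ℚ² such that ‖v‖ = Σ_{i=1}^m |⟨β_i, v⟩| for all v ∈ ℝ². That is, every norm on the plane with a rational polygonal unit ball is a finite sum of absolute values of rational linear functionals. -/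
/-!
Replace `S` by the symmetric set `P = S ∪ -S`, which has the same convex hull. List the vertices
of the unit ball lying in the upper half plane counterclockwise as `u₀, …, u_{m-1}` and put
`u_m = -u₀`. Since the edge `[u_i, u_{i+1}]` supports the ball, the norm agrees on the cone
spanned by `u_i, u_{i+1}` with `⟪n_i, ·⟫`, where `⟪n_i, u_i⟫ = ⟪n_i, u_{i+1}⟫ = 1`. The kink
`β_j = (n_j - n_{j-1}) / 2` at `u_j` (with `n_{-1} = -n_{m-1}`) is orthogonal to `u_j`, and by
convexity `⟪β_j, v⟫` has the sign of `det (u_j, v)`. Hence on the `i`-th cone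
`∑ⱼ |⟪β_j, v⟫| = ⟪∑_{j ≤ i} β_j - ∑_{j > i} β_j, v⟫`, which telescopes to `⟪n_i, v⟫ = ‖v‖`.
The normals, hence the kinks, are rational because the vertices are.
-/

open Finset
open scoped RealInnerProductSpace Pointwise

lemma Nat.exists_lt_and_not_succ (P : ℕ → Prop) {m : ℕ} (hm : 0 < m) (h0 : P 0) :
    ∃ k < m, P k ∧ (k + 1 < m → ¬P (k + 1)) := by
  classical
  refine ⟨Nat.findGreatest P (m - 1), by have := Nat.findGreatest_le (P := P) (m - 1); omega,
    Nat.findGreatest_spec (Nat.zero_le _) h0,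
    fun h => Nat.findGreatest_is_greatest (n := m - 1) ?_ ?_⟩ <;> omega

lemma Finset.sum_range_ite_half_sub {M : Type*} [AddCommGroup M] [Module ℝ M] (f : ℕ → M)
    {i m : ℕ} (hi : i < m) (hf : f 0 = -f m) :
    ∑ j ∈ range m, (if j ≤ i then (2 : ℝ)⁻¹ • (f (j + 1) - f j)
      else -((2 : ℝ)⁻¹ • (f (j + 1) - f j))) = f (i + 1) := by
  rw [← sum_range_add_sum_Ico _ (show i + 1 ≤ m by omega),
    sum_congr rfl fun j hj => if_pos (Nat.lt_succ_iff.1 (mem_range.1 hj)),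
    sum_congr rfl fun j hj => if_neg (by have := (mem_Ico.1 hj).1; omega),
    ← smul_sum, sum_range_sub, sum_neg_distrib, ← smul_sum, sum_Ico_sub _ (by omega), hf]
  module

namespace Seminorm

section VectorSpace

variable {E : Type*} [AddCommGroup E] [Module ℝ E] (p : Seminorm ℝ E)

lemma apply_smul_add_smul_le {a b : ℝ} (ha : 0 ≤ a) (hb : 0 ≤ b) (x y : E) :
    p (a • x + b • y) ≤ a * p x + b * p y := by
  have := map_add_le_add p (a • x) (b • y)
  rwa [map_smul_eq_mul, map_smul_eq_mul, Real.norm_of_nonneg ha, Real.norm_of_nonneg hb] at this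

lemma apply_lt_one_of_eq_smul_add_smul {a b : ℝ} {s x y : E} (hs : p s ≤ 1) (hy : p y ≤ 1)
    (hb : b ≤ 0) (hab : 1 < a + b) (h : s = a • x + b • y) : p x < 1 := by
  have ha : 0 < a := by linarith
  have hx : x = a⁻¹ • s + (-b / a) • y := by
    rw [h]
    match_scalars <;> field_simp; ring
  calc p x ≤ a⁻¹ * p s + (-b / a) * p y := by
        rw [hx]; exact p.apply_smul_add_smul_le (by positivity) (by bound) s y
    _ ≤ a⁻¹ * 1 + (-b / a) * 1 := by gcongr; bound
    _ = (1 - b) / a := by ring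
    _ < 1 := by rw [div_lt_one ha]; linarith

lemma convexHull_union_neg [DecidableEq E] {S : Finset E}
    (hS : {v | p v ≤ 1} = convexHull ℝ (S : Set E)) :
    {v | p v ≤ 1} = convexHull ℝ ((S ∪ -S : Finset E) : Set E) := by
  refine hS.trans (le_antisymm (convexHull_mono (by simp))
    (convexHull_min ?_ (convex_convexHull ℝ _)))
  intro x hx
  simp only [coe_union, coe_neg, Set.mem_union, mem_coe, Set.mem_neg] at hx
  rcases hx with hx | hx
  · exact subset_convexHull ℝ _ hx
  · have hx' : -x ∈ convexHull ℝ (S : Set E) := subset_convexHull ℝ _ hx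
    rw [← hS] at hx' ⊢
    simpa using hx'

end VectorSpace

section InnerProductSpace

variable {E : Type*} [NormedAddCommGroup E] [InnerProductSpace ℝ E] {p : Seminorm ℝ E}
  {P : Finset E}

lemma apply_le_one_of_mem (hP : {v | p v ≤ 1} = convexHull ℝ (P : Set E)) {t : E}
    (ht : t ∈ P) : p t ≤ 1 := by
  have : t ∈ convexHull ℝ (P : Set E) := subset_convexHull ℝ _ ht
  rwa [← hP] at this

lemma inner_le_of_forall_mem (hP : {v | p v ≤ 1} = convexHull ℝ (P : Set E)) {f : E} {M : ℝ}
    (hf : ∀ t ∈ P, ⟪f, t⟫ ≤ M) {v : E} (hv : p v ≤ 1) : ⟪f, v⟫ ≤ M := by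
  have hlin : IsLinearMap ℝ (fun x : E => ⟪f, x⟫) :=
    ⟨fun x y => inner_add_right f x y, fun c x => real_inner_smul_right f x c⟩
  have hv' : v ∈ convexHull ℝ (P : Set E) := by rw [← hP]; exact hv
  exact convexHull_min (fun t ht => hf t ht) (convex_halfSpace_le hlin M) hv'

lemma inner_le_apply (hP : {v | p v ≤ 1} = convexHull ℝ (P : Set E)) {f : E}
    (hf : ∀ t ∈ P, ⟪f, t⟫ ≤ 1) (v : E) : ⟪f, v⟫ ≤ p v := by
  refine le_of_forall_pos_le_add fun ε hε => ?_
  have hpos : 0 < p v + ε := by positivity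
  have h := inner_le_of_forall_mem hP hf (v := (p v + ε)⁻¹ • v) (by
    rw [map_smul_eq_mul, Real.norm_of_nonneg (by positivity), inv_mul_le_one₀ hpos]
    linarith)
  rwa [inner_smul_right, inv_mul_le_one₀ hpos] at h

lemma exists_mem_apply_eq_one_inner_le (hP : {v | p v ≤ 1} = convexHull ℝ (P : Set E))
    {f w : E} (hw : p w ≤ 1) (hfw : 0 < ⟪f, w⟫) : ∃ s ∈ P, p s = 1 ∧ ⟪f, w⟫ ≤ ⟪f, s⟫ := by
  have hne : P.Nonempty := by
    rw [Finset.nonempty_iff_ne_empty]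
    rintro rfl
    have : w ∈ convexHull ℝ ((∅ : Finset E) : Set E) := by rw [← hP]; exact hw
    simp at this
  obtain ⟨s, hs, hmax⟩ := P.exists_max_image (fun t => ⟪f, t⟫) hne
  have hws : ⟪f, w⟫ ≤ ⟪f, s⟫ := inner_le_of_forall_mem hP hmax hw
  have hfs : 0 < ⟪f, s⟫ := hfw.trans_le hws
  -- rescaling `f` so that its maximum over `P` is `1` gives `1 ≤ p s`
  have h1 : ⟪⟪f, s⟫⁻¹ • f, s⟫ ≤ p s := inner_le_apply hP (fun t ht => by
    rw [inner_smul_left, conj_trivial, inv_mul_le_one₀ hfs]; exact hmax t ht) s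
  rw [inner_smul_left, conj_trivial, inv_mul_cancel₀ hfs.ne'] at h1
  exact ⟨s, hs, le_antisymm (apply_le_one_of_mem hP hs) h1, hws⟩

end InnerProductSpace

end Seminorm

local notation "ℝ²" => EuclideanSpace ℝ (Fin 2)

namespace PlanarNorm

lemma ext_coords {x y : ℝ²} (h0 : x 0 = y 0) (h1 : x 1 = y 1) : x = y := by
  ext j; fin_cases j <;> assumption

lemma inner_eq_coords (x y : ℝ²) : ⟪x, y⟫ = x 0 * y 0 + x 1 * y 1 := by
  simp [PiLp.inner_apply, Fin.sum_univ_two, mul_comm]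

def cross (p q : ℝ²) : ℝ := p 0 * q 1 - p 1 * q 0

def rotate (p : ℝ²) : ℝ² := !₂[-p 1, p 0]

@[simp] lemma rotate_apply_zero (p : ℝ²) : rotate p 0 = -p 1 := by simp [rotate]
@[simp] lemma rotate_apply_one (p : ℝ²) : rotate p 1 = p 0 := by simp [rotate]

lemma inner_rotate_left (p v : ℝ²) : ⟪rotate p, v⟫ = cross p v := by
  simp only [inner_eq_coords, rotate_apply_zero, rotate_apply_one, cross]; ring

lemma cross_rotate_self (p : ℝ²) : cross p (rotate p) = ⟪p, p⟫ := by
  simp only [inner_eq_coords, rotate_apply_zero, rotate_apply_one, cross]; ring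

lemma cross_swap (p q : ℝ²) : cross q p = -cross p q := by simp only [cross]; ring
@[simp] lemma cross_self (p : ℝ²) : cross p p = 0 := by simp only [cross]; ring
@[simp] lemma cross_neg_left (p q : ℝ²) : cross (-p) q = -cross p q := by simp [cross]; ring
@[simp] lemma cross_neg_right (p q : ℝ²) : cross p (-q) = -cross p q := by simp [cross]; ring

lemma cross_add_right (p q r : ℝ²) : cross p (q + r) = cross p q + cross p r := by
  simp [cross]; ring

lemma cross_smul_right (c : ℝ) (p q : ℝ²) : cross p (c • q) = c * cross p q := by
  simp [cross]; ring

lemma eq_cross_div_smul_add_cross_div_smul {p q : ℝ²} (h : cross p q ≠ 0) (s : ℝ²) :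
    s = (cross s q / cross p q) • p + (cross p s / cross p q) • q := by
  apply ext_coords <;>
  · simp only [PiLp.add_apply, PiLp.smul_apply, smul_eq_mul]
    field_simp
    simp only [cross]
    ring

lemma inner_eq_cross_div_mul_of_inner_eq_zero {β u q : ℝ²} (hu : ⟪β, u⟫ = 0)
    (huq : cross u q ≠ 0) (v : ℝ²) : ⟪β, v⟫ = cross u v / cross u q * ⟪β, q⟫ := by
  conv_lhs => rw [eq_cross_div_smul_add_cross_div_smul huq v]
  rw [inner_add_right, inner_smul_right, inner_smul_right, hu, mul_zero, zero_add]

noncomputable def edgeNormal (x y : ℝ²) : ℝ² := (cross x y)⁻¹ • rotate (x - y)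

lemma inner_edgeNormal_left {x y : ℝ²} (h : cross x y ≠ 0) : ⟪edgeNormal x y, x⟫ = 1 := by
  rw [edgeNormal, inner_smul_left, inner_rotate_left]
  simp only [cross] at *
  simp only [PiLp.sub_apply, conj_trivial]
  field_simp
  ring

lemma inner_edgeNormal_right {x y : ℝ²} (h : cross x y ≠ 0) : ⟪edgeNormal x y, y⟫ = 1 := by
  rw [edgeNormal, inner_smul_left, inner_rotate_left]
  simp only [cross] at *
  simp only [PiLp.sub_apply, conj_trivial]
  field_simp
  ring

def InCone (x y v : ℝ²) : Prop := 0 ≤ cross x v ∧ 0 ≤ cross v y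

lemma InCone.exists_eq_smul_add_smul {x y v : ℝ²} (hv : InCone x y v) (hxy : 0 < cross x y) :
    ∃ a b : ℝ, 0 ≤ a ∧ 0 ≤ b ∧ v = a • x + b • y :=
  ⟨_, _, div_nonneg hv.2 hxy.le, div_nonneg hv.1 hxy.le,
    eq_cross_div_smul_add_cross_div_smul hxy.ne' v⟩

/-- Half-open, so that exactly one of `v`, `-v` is upper when `v ≠ 0`. -/
def IsUpper (v : ℝ²) : Prop := 0 < v 1 ∨ v 1 = 0 ∧ 0 < v 0

lemma isUpper_or_isUpper_neg {v : ℝ²} (hv : v ≠ 0) : IsUpper v ∨ IsUpper (-v) := by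
  by_contra! h
  simp only [IsUpper, PiLp.neg_apply, neg_pos, neg_eq_zero, not_or, not_and, not_lt] at h
  obtain ⟨⟨h1, h0⟩, h1', h0'⟩ := h
  have h1 : v 1 = 0 := le_antisymm h1 h1'
  exact hv (ext_coords (le_antisymm (h0 h1) (h0' h1)) h1)

lemma IsUpper.exists_pos_smul_of_cross_eq_zero {p q : ℝ²} (hp : IsUpper p) (hq : IsUpper q)
    (h : cross p q = 0) : ∃ c : ℝ, 0 < c ∧ q = c • p := by
  unfold cross at h
  rcases hp with hp1 | ⟨hp1, hp0⟩
  · refine ⟨q 1 / p 1, ?_, ext_coords ?_ ?_⟩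
    · rcases hq with hq1 | ⟨hq1, hq0⟩
      · positivity
      · rw [hq1] at h; nlinarith
    · simp only [PiLp.smul_apply, smul_eq_mul]; field_simp; linarith
    · simp only [PiLp.smul_apply, smul_eq_mul]; field_simp
  · have hq1 : q 1 = 0 := by rw [hp1] at h; simpa [hp0.ne'] using h
    have hq0 : 0 < q 0 := by rcases hq with hq | hq <;> [linarith; exact hq.2]
    refine ⟨q 0 / p 0, by positivity, ext_coords ?_ ?_⟩
    · simp only [PiLp.smul_apply, smul_eq_mul]; field_simp
    · simp [hp1, hq1]

lemma IsUpper.cross_pos_trans {a b c : ℝ²} (ha : IsUpper a) (hb : IsUpper b) (hc : IsUpper c)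
    (hab : 0 < cross a b) (hbc : 0 < cross b c) : 0 < cross a c := by
  have key : cross a c * b 1 = cross a b * c 1 + cross b c * a 1 := by simp only [cross]; ring
  unfold cross at *
  rcases ha with ha | ⟨ha1, ha0⟩ <;> rcases hb with hb | ⟨hb1, hb0⟩ <;>
    rcases hc with hc | ⟨hc1, hc0⟩ <;> simp_all <;> nlinarith

def IsRat (x : ℝ²) : Prop := ∀ j, x j ∈ (Rat.castHom ℝ).fieldRange

lemma isRat_iff {x : ℝ²} : IsRat x ↔ ∀ j, ∃ q : ℚ, x j = q := by
  simp [IsRat, RingHom.mem_fieldRange, eq_comm]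

lemma IsRat.neg {x : ℝ²} (hx : IsRat x) : IsRat (-x) := fun j => by
  simpa using neg_mem (hx j)

lemma IsRat.sub {x y : ℝ²} (hx : IsRat x) (hy : IsRat y) : IsRat (x - y) := fun j => by
  simpa using sub_mem (hx j) (hy j)

lemma IsRat.smul {c : ℝ} (hc : c ∈ (Rat.castHom ℝ).fieldRange) {x : ℝ²} (hx : IsRat x) :
    IsRat (c • x) := fun j => by
  simpa using mul_mem hc (hx j)

lemma IsRat.rotate {x : ℝ²} (hx : IsRat x) : IsRat (rotate x) := by
  intro j; fin_cases j
  · simpa using neg_mem (hx 1)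
  · simpa using hx 0

lemma IsRat.cross_mem {x y : ℝ²} (hx : IsRat x) (hy : IsRat y) :
    cross x y ∈ (Rat.castHom ℝ).fieldRange :=
  sub_mem (mul_mem (hx 0) (hy 1)) (mul_mem (hx 1) (hy 0))

lemma IsRat.edgeNormal {x y : ℝ²} (hx : IsRat x) (hy : IsRat y) : IsRat (edgeNormal x y) :=
  (hx.sub hy).rotate.smul (inv_mem (hx.cross_mem hy))

lemma exists_mem_apply_eq_one_cross_pos {p : Seminorm ℝ ℝ²} {P : Finset ℝ²}
    (hP : {v | p v ≤ 1} = convexHull ℝ (P : Set ℝ²))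
    {x : ℝ²} (hx : x ≠ 0) : ∃ s ∈ P, p s = 1 ∧ 0 < cross x s := by
  set c := (1 + p (rotate x))⁻¹
  have hc : 0 < c := by positivity
  have hw : p (c • rotate x) ≤ 1 := by
    rw [map_smul_eq_mul, Real.norm_of_nonneg hc.le, inv_mul_le_one₀ (by positivity)]
    linarith
  have hpos : 0 < ⟪rotate x, c • rotate x⟫ := by
    rw [inner_smul_right, inner_rotate_left, cross_rotate_self]
    exact mul_pos hc (real_inner_self_pos.2 hx)
  obtain ⟨s, hs, hs1, hle⟩ := Seminorm.exists_mem_apply_eq_one_inner_le hP hw hpos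
  exact ⟨s, hs, hs1, by rw [← inner_rotate_left]; exact hpos.trans_le hle⟩

lemma exists_enumeration_cross_pos {U : Finset ℝ²} (hU : ∀ x ∈ U, IsUpper x)
    (hUcross : ∀ x ∈ U, ∀ y ∈ U, x ≠ y → cross x y ≠ 0) :
    ∃ u : ℕ → ℝ², (∀ i < #U, u i ∈ U) ∧ (∀ ⦃i j⦄, i < j → j < #U → 0 < cross (u i) (u j)) ∧
      ∀ x ∈ U, ∃ i < #U, u i = x := by
  classical
  let r : U → U → Prop := fun a b => a = b ∨ 0 < cross a b
  have trans : IsTrans U r := ⟨by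
    rintro a b c (rfl | hab) (rfl | hbc)
    exacts [Or.inl rfl, Or.inr hbc, Or.inr hab,
      Or.inr ((hU _ a.2).cross_pos_trans (hU _ b.2) (hU _ c.2) hab hbc)]⟩
  have antisymm : Std.Antisymm r := ⟨by
    rintro a b (rfl | hab) (h | hba)
    exacts [rfl, rfl, h.symm, by rw [cross_swap] at hba; linarith]⟩
  have total : Std.Total r := ⟨fun a b => by
    by_cases hab : a = b
    · exact Or.inl (Or.inl hab)
    · rcases (hUcross a a.2 b b.2 (Subtype.coe_ne_coe.2 hab)).lt_or_gt with h | h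
      · exact Or.inr (Or.inr (by rw [cross_swap]; linarith))
      · exact Or.inl (Or.inr h)⟩
  set L := (U.attach.sort r).map Subtype.val
  have hlen : L.length = #U := by simp [L]
  have hsorted : L.Pairwise (fun a b => 0 < cross a b) := List.pairwise_map.2 <|
    ((U.attach.pairwise_sort r).and (U.attach.sort_nodup r)).imp fun h =>
      h.1.resolve_left h.2
  refine ⟨fun i => L.getD i 0, fun i hi => ?_, fun i j hij hj => ?_, fun x hx => ?_⟩
  · dsimp only
    rw [List.getD_eq_getElem _ _ (hlen ▸ hi)]
    simp [L]
  · dsimp only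
    rw [List.getD_eq_getElem _ _ (by omega), List.getD_eq_getElem _ _ (by omega)]
    exact List.pairwise_iff_getElem.1 hsorted i j _ _ hij
  · obtain ⟨i, hi, hix⟩ := List.getElem_of_mem (show x ∈ L by simpa [L] using hx)
    exact ⟨i, hlen ▸ hi, by dsimp only; rw [List.getD_eq_getElem _ _ hi, hix]⟩

/-- The vertices `u 0, …, u (m-1)` of the polygon lying in the upper half plane, in
counterclockwise order, closed up by `u m = -u 0`. -/
structure VertexCycle (p : Seminorm ℝ ℝ²) (P : Finset ℝ²) where
  m : ℕ
  u : ℕ → ℝ²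
  two_le : 2 ≤ m
  mem : ∀ i ≤ m, u i ∈ P
  apply_eq_one : ∀ i ≤ m, p (u i) = 1
  isUpper : ∀ i < m, IsUpper (u i)
  u_m : u m = -u 0
  cross_pos : ∀ ⦃i j⦄, i < j → j < m → 0 < cross (u i) (u j)
  surj : ∀ x ∈ P, p x = 1 → IsUpper x → ∃ i < m, u i = x
  ball_eq : {v | p v ≤ 1} = convexHull ℝ (P : Set ℝ²)
  neg_mem : ∀ x ∈ P, -x ∈ P

namespace VertexCycle

variable {p : Seminorm ℝ ℝ²} {P : Finset ℝ²} (C : VertexCycle p P)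

lemma lt_of_cross_pos {i j : ℕ} (hi : i < C.m)
    (h : 0 < cross (C.u i) (C.u j)) : i < j := by
  by_contra! hji
  rcases hji.eq_or_lt with rfl | hji
  · simp at h
  · have := C.cross_pos hji hi
    rw [cross_swap] at this
    linarith

lemma cross_nonneg {i j : ℕ} (hij : i ≤ j) (hj : j ≤ C.m) : 0 ≤ cross (C.u i) (C.u j) := by
  rcases hij.eq_or_lt with rfl | hij
  · simp
  rcases hj.eq_or_lt with rfl | hj
  · rw [C.u_m, cross_neg_right, cross_swap, neg_neg]
    rcases Nat.eq_zero_or_pos i with rfl | hi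
    · simp
    · exact (C.cross_pos hi hij).le
  · exact (C.cross_pos hij hj).le

lemma cross_succ_pos {i : ℕ} (hi : i < C.m) : 0 < cross (C.u i) (C.u (i + 1)) := by
  rcases Nat.lt_or_ge (i + 1) C.m with h | h
  · exact C.cross_pos (Nat.lt_succ_self i) h
  · rw [show i + 1 = C.m by omega, C.u_m, cross_neg_right, cross_swap, neg_neg]
    exact C.cross_pos (by have := C.two_le; omega) hi

lemma not_cross_pos_and_cross_pos {i : ℕ} (hi : i < C.m) {s : ℝ²}
    (hs : s ∈ P) (hs1 : p s = 1) : ¬(0 < cross (C.u i) s ∧ 0 < cross s (C.u (i + 1))) := by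
  rintro ⟨his, hsi⟩
  have hs0 : s ≠ 0 := by rintro rfl; simp at hs1
  rcases isUpper_or_isUpper_neg hs0 with hup | hup
  · obtain ⟨k, hk, rfl⟩ := C.surj s hs hs1 hup
    have := C.lt_of_cross_pos hi his
    rcases Nat.lt_or_ge (i + 1) C.m with h | h
    · have := C.lt_of_cross_pos hk hsi
      omega
    · omega
  · obtain ⟨k, hk, hks⟩ := C.surj (-s) (C.neg_mem s hs) (by rwa [map_neg_eq_map]) hup
    have hki : k < i :=
      C.lt_of_cross_pos hk (by rw [hks, cross_neg_left, cross_swap, neg_neg]; exact his)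
    rcases Nat.lt_or_ge (i + 1) C.m with h | h
    · have := C.lt_of_cross_pos h (by rw [hks, cross_neg_right, cross_swap, neg_neg]; exact hsi)
      omega
    · rw [show i + 1 = C.m by omega, C.u_m, cross_neg_right, cross_swap, neg_neg] at hsi
      have h0k : cross (C.u 0) (C.u k) < 0 := by rw [hks, cross_neg_right]; linarith
      rcases Nat.eq_zero_or_pos k with rfl | hk0
      · simp at h0k
      · linarith [C.cross_pos hk0 hk]

lemma inner_edgeNormal_le_one {i : ℕ} (hi : i < C.m) {t : ℝ²} (ht : t ∈ P) :
    ⟪edgeNormal (C.u i) (C.u (i + 1)), t⟫ ≤ 1 := by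
  by_contra! ht1
  obtain ⟨s, hs, hs1, hts⟩ :=
    Seminorm.exists_mem_apply_eq_one_inner_le C.ball_eq
      (Seminorm.apply_le_one_of_mem C.ball_eq ht) (one_pos.trans ht1)
  have hc := C.cross_succ_pos hi
  set a := cross s (C.u (i + 1)) / cross (C.u i) (C.u (i + 1))
  set b := cross (C.u i) s / cross (C.u i) (C.u (i + 1))
  have hsab : s = a • C.u i + b • C.u (i + 1) := eq_cross_div_smul_add_cross_div_smul hc.ne' s
  have hab : 1 < a + b := by
    have : ⟪edgeNormal (C.u i) (C.u (i + 1)), s⟫ = a + b := by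
      rw [hsab, inner_add_right, inner_smul_right, inner_smul_right,
        inner_edgeNormal_left hc.ne', inner_edgeNormal_right hc.ne', mul_one, mul_one]
    linarith
  have hu := C.apply_eq_one i (by omega)
  have hu' := C.apply_eq_one (i + 1) (by omega)
  -- `b ≤ 0` or `a ≤ 0` would put `u i` or `u (i + 1)` strictly inside the ball; otherwise `s` is
  -- a vertex strictly between them
  rcases le_or_gt b 0 with hb | hb
  · exact (p.apply_lt_one_of_eq_smul_add_smul hs1.le hu'.le hb hab hsab).ne hu
  rcases le_or_gt a 0 with ha | ha
  · exact (p.apply_lt_one_of_eq_smul_add_smul hs1.le hu.le ha (by linarith)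
      (hsab.trans (add_comm _ _))).ne hu'
  exact C.not_cross_pos_and_cross_pos hi hs hs1
    ⟨(div_pos_iff_of_pos_right hc).1 hb, (div_pos_iff_of_pos_right hc).1 ha⟩

lemma apply_eq_inner_edgeNormal {i : ℕ} (hi : i < C.m) {v : ℝ²}
    (hv : InCone (C.u i) (C.u (i + 1)) v) : p v = ⟪edgeNormal (C.u i) (C.u (i + 1)), v⟫ := by
  have hc := C.cross_succ_pos hi
  obtain ⟨a, b, ha, hb, rfl⟩ := hv.exists_eq_smul_add_smul hc
  refine le_antisymm ?_
    (Seminorm.inner_le_apply C.ball_eq (fun t ht => C.inner_edgeNormal_le_one hi ht) _)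
  rw [inner_add_right, inner_smul_right, inner_smul_right, inner_edgeNormal_left hc.ne',
    inner_edgeNormal_right hc.ne']
  calc p (a • C.u i + b • C.u (i + 1)) ≤ a * p (C.u i) + b * p (C.u (i + 1)) :=
        p.apply_smul_add_smul_le ha hb _ _
    _ = a * 1 + b * 1 := by rw [C.apply_eq_one i hi.le, C.apply_eq_one (i + 1) hi]

lemma sub_one_add_one : C.m - 1 + 1 = C.m := by have := C.two_le; omega

/-- `C.normal k` is the outer normal of the edge ending at `C.u k`, with `[-C.u (m-1), C.u 0]`
as the edge ending at `C.u 0`. -/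
noncomputable def normal : ℕ → ℝ²
  | 0 => -edgeNormal (C.u (C.m - 1)) (C.u C.m)
  | k + 1 => edgeNormal (C.u k) (C.u (k + 1))

lemma normal_zero : C.normal 0 = -C.normal C.m := by
  conv_rhs => rw [← C.sub_one_add_one]
  simp only [normal, C.sub_one_add_one]

lemma inner_normal_le_one {k : ℕ} (hk : k ≤ C.m) {t : ℝ²} (ht : t ∈ P) :
    ⟪C.normal k, t⟫ ≤ 1 := by
  cases k with
  | zero =>
    have := C.inner_edgeNormal_le_one (i := C.m - 1) (by have := C.two_le; omega)
      (C.neg_mem t ht)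
    rwa [C.sub_one_add_one, inner_neg_right, ← inner_neg_left] at this
  | succ k => exact C.inner_edgeNormal_le_one hk ht

lemma inner_normal_self {k : ℕ} (hk : k ≤ C.m) : ⟪C.normal k, C.u k⟫ = 1 := by
  cases k with
  | zero =>
    have := C.cross_succ_pos (i := C.m - 1) (by have := C.two_le; omega)
    rw [C.sub_one_add_one] at this
    rw [normal, inner_neg_left, ← inner_neg_right, ← C.u_m, inner_edgeNormal_right this.ne']
  | succ k => exact inner_edgeNormal_right (C.cross_succ_pos hk).ne'

lemma inner_normal_succ {k : ℕ} (hk : k < C.m) : ⟪C.normal (k + 1), C.u k⟫ = 1 :=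
  inner_edgeNormal_left (C.cross_succ_pos hk).ne'

noncomputable def kink (j : ℕ) : ℝ² := (2 : ℝ)⁻¹ • (C.normal (j + 1) - C.normal j)

lemma inner_kink_eq {j : ℕ} (hj : j < C.m) (v : ℝ²) :
    ⟪C.kink j, v⟫ = cross (C.u j) v / cross (C.u j) (C.u (j + 1)) * ⟪C.kink j, C.u (j + 1)⟫ :=
  inner_eq_cross_div_mul_of_inner_eq_zero
    (by rw [kink, inner_smul_left, inner_sub_left, C.inner_normal_succ hj,
      C.inner_normal_self hj.le, sub_self, mul_zero]) (C.cross_succ_pos hj).ne' v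

lemma inner_kink_succ_nonneg {j : ℕ} (hj : j < C.m) : 0 ≤ ⟪C.kink j, C.u (j + 1)⟫ := by
  rw [kink, inner_smul_left, inner_sub_left, C.inner_normal_self hj]
  have := C.inner_normal_le_one hj.le (C.mem (j + 1) hj)
  simp only [conj_trivial]
  linarith

lemma inner_kink_nonneg {j : ℕ} (hj : j < C.m) {v : ℝ²} (hv : 0 ≤ cross (C.u j) v) :
    0 ≤ ⟪C.kink j, v⟫ := by
  rw [C.inner_kink_eq hj]
  exact mul_nonneg (div_nonneg hv (C.cross_succ_pos hj).le) (C.inner_kink_succ_nonneg hj)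

lemma inner_kink_nonpos {j : ℕ} (hj : j < C.m) {v : ℝ²} (hv : cross (C.u j) v ≤ 0) :
    ⟪C.kink j, v⟫ ≤ 0 := by
  rw [C.inner_kink_eq hj]
  exact mul_nonpos_of_nonpos_of_nonneg (div_nonpos_of_nonpos_of_nonneg hv (C.cross_succ_pos hj).le)
    (C.inner_kink_succ_nonneg hj)

lemma cross_nonneg_of_inCone {i j : ℕ} (hi : i < C.m) {v : ℝ²}
    (hv : InCone (C.u i) (C.u (i + 1)) v) (hji : j ≤ i) : 0 ≤ cross (C.u j) v := by
  obtain ⟨a, b, ha, hb, rfl⟩ := hv.exists_eq_smul_add_smul (C.cross_succ_pos hi)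
  rw [cross_add_right, cross_smul_right, cross_smul_right]
  exact add_nonneg (mul_nonneg ha (C.cross_nonneg hji hi.le))
    (mul_nonneg hb (C.cross_nonneg (by omega) hi))

lemma cross_nonpos_of_inCone {i j : ℕ} (hi : i < C.m) {v : ℝ²}
    (hv : InCone (C.u i) (C.u (i + 1)) v) (hij : i < j) (hj : j < C.m) :
    cross (C.u j) v ≤ 0 := by
  obtain ⟨a, b, ha, hb, rfl⟩ := hv.exists_eq_smul_add_smul (C.cross_succ_pos hi)
  rw [cross_add_right, cross_smul_right, cross_smul_right, cross_swap (C.u i),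
    cross_swap (C.u (i + 1))]
  have := C.cross_nonneg hij.le hj.le
  have := C.cross_nonneg (i := i + 1) hij hj.le
  nlinarith

lemma sum_abs_inner_kink_of_inCone {i : ℕ} (hi : i < C.m) {v : ℝ²}
    (hv : InCone (C.u i) (C.u (i + 1)) v) :
    ∑ j ∈ range C.m, |⟪C.kink j, v⟫| = ⟪C.normal (i + 1), v⟫ :=
  calc ∑ j ∈ range C.m, |⟪C.kink j, v⟫|
      = ∑ j ∈ range C.m, ⟪if j ≤ i then C.kink j else -C.kink j, v⟫ := by
        refine sum_congr rfl fun j hj => ?_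
        have hj := mem_range.1 hj
        split_ifs with hji
        · exact abs_of_nonneg (C.inner_kink_nonneg hj (C.cross_nonneg_of_inCone hi hv hji))
        · rw [inner_neg_left]
          exact abs_of_nonpos
            (C.inner_kink_nonpos hj (C.cross_nonpos_of_inCone hi hv (by omega) hj))
    _ = ⟪∑ j ∈ range C.m, (if j ≤ i then C.kink j else -C.kink j), v⟫ := (sum_inner _ _ _).symm
    _ = ⟪C.normal (i + 1), v⟫ := by
        congr 1
        exact Finset.sum_range_ite_half_sub C.normal hi C.normal_zero

lemma exists_inCone_of_isUpper {v : ℝ²} (hv : IsUpper v) :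
    ∃ i < C.m, InCone (C.u i) (C.u (i + 1)) v ∨ InCone (C.u i) (C.u (i + 1)) (-v) := by
  have hm := C.two_le
  rcases lt_or_ge (cross (C.u 0) v) 0 with h0 | h0
  · refine ⟨C.m - 1, by omega, Or.inr ⟨?_, ?_⟩⟩
    · have := hv.cross_pos_trans (C.isUpper 0 (by omega)) (C.isUpper (C.m - 1) (by omega))
        (by rw [cross_swap]; linarith) (C.cross_pos (by omega) (by omega))
      rw [cross_neg_right, cross_swap, neg_neg]
      exact this.le
    · rw [C.sub_one_add_one, C.u_m, cross_neg_left, cross_neg_right, neg_neg, cross_swap]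
      linarith
  · obtain ⟨k, hk, hkv, hnext⟩ :=
      Nat.exists_lt_and_not_succ (fun k => 0 ≤ cross (C.u k) v) (m := C.m) (by omega) h0
    refine ⟨k, hk, Or.inl ⟨hkv, ?_⟩⟩
    rcases Nat.lt_or_ge (k + 1) C.m with h | h
    · have := hnext h
      rw [cross_swap]
      linarith
    · rw [show k + 1 = C.m by omega, C.u_m, cross_neg_right, cross_swap, neg_neg]
      exact h0

lemma exists_inCone {v : ℝ²} (hv : v ≠ 0) :
    ∃ i < C.m, InCone (C.u i) (C.u (i + 1)) v ∨ InCone (C.u i) (C.u (i + 1)) (-v) := by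
  rcases isUpper_or_isUpper_neg hv with h | h
  · exact C.exists_inCone_of_isUpper h
  · obtain ⟨i, hi, h'⟩ := C.exists_inCone_of_isUpper h
    exact ⟨i, hi, by rwa [neg_neg, or_comm] at h'⟩

theorem apply_eq_sum_abs_inner_kink (v : ℝ²) : p v = ∑ j ∈ range C.m, |⟪C.kink j, v⟫| := by
  have hcone : ∀ i < C.m, ∀ w, InCone (C.u i) (C.u (i + 1)) w →
      p w = ∑ j ∈ range C.m, |⟪C.kink j, w⟫| := fun i hi w hw => by
    rw [C.apply_eq_inner_edgeNormal hi hw, C.sum_abs_inner_kink_of_inCone hi hw]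
    rfl
  rcases eq_or_ne v 0 with rfl | hv
  · simp
  obtain ⟨i, hi, hw | hw⟩ := C.exists_inCone hv
  · exact hcone i hi v hw
  · simpa [inner_neg_right] using hcone i hi (-v) hw

lemma isRat_normal (hPrat : ∀ x ∈ P, IsRat x) {k : ℕ} (hk : k ≤ C.m) : IsRat (C.normal k) := by
  cases k with
  | zero => exact ((hPrat _ (C.mem _ (by omega))).edgeNormal (hPrat _ (C.mem _ le_rfl))).neg
  | succ k => exact (hPrat _ (C.mem k (by omega))).edgeNormal (hPrat _ (C.mem _ hk))

lemma isRat_kink (hPrat : ∀ x ∈ P, IsRat x) {j : ℕ} (hj : j < C.m) : IsRat (C.kink j) :=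
  ((C.isRat_normal hPrat hj).sub (C.isRat_normal hPrat hj.le)).smul ⟨2⁻¹, by simp⟩

end VertexCycle

noncomputable def upperVertices (p : Seminorm ℝ ℝ²) (P : Finset ℝ²) : Finset ℝ² := by
  classical exact P.filter fun x => p x = 1 ∧ IsUpper x

section Construction

variable {p : Seminorm ℝ ℝ²} {P : Finset ℝ²}

lemma mem_upperVertices {x : ℝ²} : x ∈ upperVertices p P ↔ x ∈ P ∧ p x = 1 ∧ IsUpper x := by
  classical simp [upperVertices]

lemma exists_mem_upperVertices (hPneg : ∀ x ∈ P, -x ∈ P) {s : ℝ²} (hs : s ∈ P) (hs1 : p s = 1) :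
    ∃ x ∈ upperVertices p P, x = s ∨ x = -s := by
  have hs0 : s ≠ 0 := by rintro rfl; simp at hs1
  rcases isUpper_or_isUpper_neg hs0 with h | h
  · exact ⟨s, mem_upperVertices.2 ⟨hs, hs1, h⟩, Or.inl rfl⟩
  · exact ⟨-s, mem_upperVertices.2 ⟨hPneg s hs, by rwa [map_neg_eq_map], h⟩, Or.inr rfl⟩

lemma two_le_card_upperVertices (hP : {v | p v ≤ 1} = convexHull ℝ (P : Set ℝ²))
    (hPneg : ∀ x ∈ P, -x ∈ P) : 2 ≤ #(upperVertices p P) := by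
  obtain ⟨s, hs, hs1, -⟩ :=
    exists_mem_apply_eq_one_cross_pos hP (by simp : (EuclideanSpace.single 0 1 : ℝ²) ≠ 0)
  obtain ⟨s', hs', hs1', hss'⟩ :=
    exists_mem_apply_eq_one_cross_pos hP (show s ≠ 0 by rintro rfl; simp at hs1)
  obtain ⟨x, hx, hxs⟩ := exists_mem_upperVertices hPneg hs hs1
  obtain ⟨y, hy, hys⟩ := exists_mem_upperVertices hPneg hs' hs1'
  have hxy : cross x y ≠ 0 := by
    rcases hxs with rfl | rfl <;> rcases hys with rfl | rfl <;> simp [hss'.ne']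
  exact Finset.one_lt_card.2 ⟨x, hx, y, hy, fun h => hxy (by rw [h, cross_self])⟩

lemma upperVertices_cross_ne_zero {x y : ℝ²} (hx : x ∈ upperVertices p P)
    (hy : y ∈ upperVertices p P) (hxy : x ≠ y) : cross x y ≠ 0 := by
  intro h
  rw [mem_upperVertices] at hx hy
  obtain ⟨c, hc, rfl⟩ := hx.2.2.exists_pos_smul_of_cross_eq_zero hy.2.2 h
  rw [map_smul_eq_mul, Real.norm_of_nonneg hc.le, hx.2.1, mul_one] at hy
  exact hxy (by rw [hy.2.1, one_smul])

lemma VertexCycle.nonempty (hP : {v | p v ≤ 1} = convexHull ℝ (P : Set ℝ²))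
    (hPneg : ∀ x ∈ P, -x ∈ P) : Nonempty (VertexCycle p P) := by
  obtain ⟨u, hu, hcross, hsurj⟩ :=
    exists_enumeration_cross_pos (fun x hx => (mem_upperVertices.1 hx).2.2)
      fun x hx y hy => upperVertices_cross_ne_zero hx hy
  set m := #(upperVertices p P)
  have h2 : 2 ≤ m := two_le_card_upperVertices hP hPneg
  have huU : ∀ i < m, u i ∈ P ∧ p (u i) = 1 ∧ IsUpper (u i) :=
    fun i hi => mem_upperVertices.1 (hu i hi)
  refine ⟨⟨m, fun i => if i < m then u i else -u 0, h2, fun i hi => ?_, fun i hi => ?_,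
    fun i hi => by simpa [hi] using (huU i hi).2.2, by simp; omega, fun i j hij hj => ?_,
    fun x hx hx1 hxu => ?_, hP, hPneg⟩⟩
  · split_ifs with h
    exacts [(huU i h).1, hPneg _ (huU 0 (by omega)).1]
  · split_ifs with h
    exacts [(huU i h).2.1, by rw [map_neg_eq_map]; exact (huU 0 (by omega)).2.1]
  · simpa [hj, hij.trans hj] using hcross hij hj
  · obtain ⟨i, hi, rfl⟩ := hsurj x (mem_upperVertices.2 ⟨hx, hx1, hxu⟩)
    exact ⟨i, hi, if_pos hi⟩

end Construction

end PlanarNorm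

open PlanarNorm in
theorem planar_rational_polygonal_norm_is_sum_abs_inner_general
    (N : EuclideanSpace ℝ (Fin 2) → ℝ)
    (hadd : ∀ v w, N (v + w) ≤ N v + N w)
    (hsmul : ∀ (a : ℝ) (v : EuclideanSpace ℝ (Fin 2)), N (a • v) = |a| * N v)
    (S : Finset (EuclideanSpace ℝ (Fin 2)))
    (hSrat : ∀ p ∈ S, ∀ j : Fin 2, ∃ q : ℚ, p j = (q : ℝ))
    (hball : {v : EuclideanSpace ℝ (Fin 2) | N v ≤ 1} =
      convexHull ℝ (S : Set (EuclideanSpace ℝ (Fin 2)))) :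
    ∃ (m : ℕ) (β : Fin m → EuclideanSpace ℝ (Fin 2)),
      (∀ (i : Fin m) (j : Fin 2), ∃ q : ℚ, β i j = (q : ℝ)) ∧
      ∀ v, N v = ∑ i, |(inner ℝ (β i) v : ℝ)| := by
  classical
  let p : Seminorm ℝ ℝ² := Seminorm.of N hadd fun a v => by rw [hsmul, Real.norm_eq_abs]
  have hP : {v | p v ≤ 1} = convexHull ℝ ((S ∪ -S : Finset ℝ²) : Set ℝ²) :=
    p.convexHull_union_neg hball
  have hPneg : ∀ x ∈ S ∪ -S, -x ∈ S ∪ -S := by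
    simp only [mem_union, mem_neg', neg_neg]
    exact fun x => Or.symm
  have hPrat : ∀ x ∈ S ∪ -S, IsRat x := by
    simp only [mem_union, mem_neg']
    rintro x (hx | hx)
    · exact isRat_iff.2 (hSrat x hx)
    · simpa using (isRat_iff.2 (hSrat _ hx)).neg
  obtain ⟨C⟩ := VertexCycle.nonempty hP hPneg
  refine ⟨C.m, fun j => C.kink j, fun j => isRat_iff.1 (C.isRat_kink hPrat j.2), fun v => ?_⟩
  rw [Fin.sum_univ_eq_sum_range (fun j => |⟪C.kink j, v⟫|)]
  exact C.apply_eq_sum_abs_inner_kink v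

/-- every norm on `ℝ²` whose closed unit ball is the convex hull of a
finite set of rational points is a finite sum of absolute values of rational linear
functionals. -/
theorem planar_rational_polygonal_norm_is_sum_abs_inner
    (N : EuclideanSpace ℝ (Fin 2) → ℝ)
    (hadd : ∀ v w, N (v + w) ≤ N v + N w)
    (hsmul : ∀ (a : ℝ) (v : EuclideanSpace ℝ (Fin 2)), N (a • v) = |a| * N v)
    (hdef : ∀ v, N v = 0 → v = 0)
    (S : Finset (EuclideanSpace ℝ (Fin 2)))
    (hSrat : ∀ p ∈ S, ∀ j : Fin 2, ∃ q : ℚ, p j = (q : ℝ))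
    (hball : {v : EuclideanSpace ℝ (Fin 2) | N v ≤ 1} =
      convexHull ℝ (S : Set (EuclideanSpace ℝ (Fin 2)))) :
    ∃ (m : ℕ) (β : Fin m → EuclideanSpace ℝ (Fin 2)),
      (∀ (i : Fin m) (j : Fin 2), ∃ q : ℚ, β i j = (q : ℝ)) ∧
      ∀ v, N v = ∑ i, |(inner ℝ (β i) v : ℝ)| :=
  planar_rational_polygonal_norm_is_sum_abs_inner_general N hadd hsmul S hSrat hball
end

section
/- Let β₁, …, β_{k−1} ∈ ℝ^n span ℝ^n and let β_k ∈ ℝ^n. Let N'(v) = Σ_{i=1}^{k−1} |⟨β_i, v⟩| and N(v) = N'(v) + |⟨β_k, v⟩|, with closed unit balls B' and B respectively. Then: (a) B ∩ β_k^⊥ = B' ∩ β_k^⊥, where β_k^⊥ = {v : ⟨β_k, v⟩ = 0}; and (b) if v' is an extreme point of B', then the point v'/(1 + |⟨β_k, v'⟩|) is an extreme point of B. -/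
/-!
Both `N'` and `|⟨γ, ·⟩|` are seminorms, so part (b) is an instance of a statement about two
seminorms `p`, `r` on a real vector space. An extreme point `v` of `{p ≤ 1}` forces `p` to be
definite (a null vector `k` would place `v` between `v ± k`), hence `p v = 1` when `v ≠ 0`, and
`w = (1 + r v)⁻¹ • v` has `(p + r) w = 1`. If `w` lies in an open segment `(a, b)` of the
`(p + r)`-ball, convexity forces `(p + r) a = (p + r) b = 1` and `p` to be affine on `[a, b]`.
Radial projection onto the `p`-sphere then carries `w` into the open segment between
`a / p a` and `b / p b`, so extremality of `v` gives `a / p a = v`, and `(p + r) a = 1` gives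
`a = w`.
-/

open Set

namespace Seminorm

variable {E : Type*} [AddCommGroup E] [Module ℝ E] (p : Seminorm ℝ E)

theorem eq_zero_of_map_eq_zero_of_mem_extremePoints {v k : E}
    (hv : v ∈ extremePoints ℝ {x | p x ≤ 1}) (hk : p k = 0) : k = 0 := by
  have hv₁ : p v ≤ 1 := hv.1
  have hadd : p (v + k) ≤ 1 := by linarith [map_add_le_add p v k]
  have hsub : p (v - k) ≤ 1 := by linarith [map_sub_le_add p v k]
  have hseg : v ∈ openSegment ℝ (v + k) (v - k) :=
    ⟨1 / 2, 1 / 2, by norm_num, by norm_num, by norm_num, by module⟩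
  simpa using hv.2 hadd hsub hseg

theorem map_inv_smul_self_le_one (x : E) : p ((p x)⁻¹ • x) ≤ 1 := by
  rw [map_smul_eq_mul, norm_inv, Real.norm_of_nonneg (apply_nonneg p x)]
  exact inv_mul_le_one_of_le₀ le_rfl (apply_nonneg p x)

theorem map_eq_one_of_mem_extremePoints {v : E} (hv : v ∈ extremePoints ℝ {x | p x ≤ 1})
    (hv₀ : v ≠ 0) : p v = 1 := by
  have hpos : 0 < p v :=
    (apply_nonneg p v).lt_of_ne' fun h => hv₀ (p.eq_zero_of_map_eq_zero_of_mem_extremePoints hv h)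
  refine (hv.1 : p v ≤ 1).antisymm (not_lt.1 fun hlt => hv₀ ?_)
  have hseg : v ∈ openSegment ℝ 0 ((p v)⁻¹ • v) :=
    ⟨1 - p v, p v, by linarith, hpos, by ring, by
      rw [smul_zero, zero_add, smul_smul, mul_inv_cancel₀ hpos.ne', one_smul]⟩
  exact (hv.2 (by simp) (p.map_inv_smul_self_le_one v) hseg).symm

theorem inv_smul_mem_openSegment_of_map_add_eq {a b : E} {t s : ℝ} (ht : 0 < t) (hs : 0 < s)
    (ha : 0 < p a) (hb : 0 < p b) (h : p (t • a + s • b) = t * p a + s * p b) :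
    (p (t • a + s • b))⁻¹ • (t • a + s • b) ∈ openSegment ℝ ((p a)⁻¹ • a) ((p b)⁻¹ • b) := by
  have hw : 0 < t * p a + s * p b := by positivity
  rw [h]
  refine ⟨t * p a / (t * p a + s * p b), s * p b / (t * p a + s * p b), by positivity,
    by positivity, by field_simp, ?_⟩
  simp only [smul_smul, smul_add]
  congr 2 <;> field_simp

theorem inv_one_add_smul_mem_extremePoints_add (r : Seminorm ℝ E) {v : E}
    (hv : v ∈ extremePoints ℝ {x | p x ≤ 1}) :
    (1 + r v)⁻¹ • v ∈ extremePoints ℝ {x | p x + r x ≤ 1} := by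
  rcases eq_or_ne v 0 with rfl | hv₀
  · have hsub : {x | p x + r x ≤ 1} ⊆ {x | p x ≤ 1} := fun x hx =>
      (le_add_of_nonneg_right (apply_nonneg r x)).trans hx
    rw [smul_zero]
    exact inter_extremePoints_subset_extremePoints_of_subset hsub ⟨by simp, hv⟩
  have hpv := p.map_eq_one_of_mem_extremePoints hv hv₀
  set c := 1 + r v
  have hc : 0 < c := by positivity
  have hscale : ∀ u : ℝ, 0 ≤ u → p (u • v) + r (u • v) = u * c := fun u hu => by
    rw [map_smul_eq_mul, map_smul_eq_mul, Real.norm_of_nonneg hu, hpv]; ring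
  refine ⟨(hscale _ (inv_nonneg.2 hc.le)).trans_le (inv_mul_cancel₀ hc.ne').le, ?_⟩
  rintro a (ha : p a + r a ≤ 1) b (hb : p b + r b ≤ 1) ⟨t, s, ht, hs, hts, hab⟩
  have hpw := p.convexOn.2 (mem_univ a) (mem_univ b) ht.le hs.le hts
  have hrw := r.convexOn.2 (mem_univ a) (mem_univ b) ht.le hs.le hts
  have hw : p (t • a + s • b) + r (t • a + s • b) = 1 := by
    rw [hab, hscale _ (inv_nonneg.2 hc.le), inv_mul_cancel₀ hc.ne']
  simp only [smul_eq_mul] at hpw hrw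
  -- `1 = (p + r) w ≤ t (p + r) a + s (p + r) b ≤ 1` forces equality throughout
  have ha₁ : p a + r a = 1 := by nlinarith
  have hb₁ : p b + r b = 1 := by nlinarith
  have hp_aff : p (t • a + s • b) = t * p a + s * p b := by nlinarith
  have hpos : ∀ x, p x + r x = 1 → 0 < p x := fun x hx =>
    (apply_nonneg p x).lt_of_ne' fun h0 => by
      rw [p.eq_zero_of_map_eq_zero_of_mem_extremePoints hv h0, map_zero, map_zero] at hx
      simp at hx
  have hseg := p.inv_smul_mem_openSegment_of_map_add_eq ht hs (hpos a ha₁) (hpos b hb₁) hp_aff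
  have hpw' : p (t • a + s • b) = c⁻¹ := by
    rw [hab, map_smul_eq_mul, norm_inv, Real.norm_of_nonneg hc.le, hpv, mul_one]
  rw [hpw', hab, inv_inv, smul_smul, mul_inv_cancel₀ hc.ne', one_smul] at hseg
  have hav : (p a)⁻¹ • a = v :=
    hv.2 (p.map_inv_smul_self_le_one a) (p.map_inv_smul_self_le_one b) hseg
  have hpa : p a = c⁻¹ := by
    have := hscale (p a) (apply_nonneg p a)
    rw [← hav, smul_smul, mul_inv_cancel₀ (hpos a ha₁).ne', one_smul, ha₁] at this
    exact eq_inv_of_mul_eq_one_left this.symm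
  rw [← hav, hpa, inv_inv, smul_smul, inv_mul_cancel₀ hc.ne', one_smul]

end Seminorm

theorem deflation_step_of_sum_abs_inner_general
    (n k : ℕ) (β : Fin k → EuclideanSpace ℝ (Fin n))
    (γ : EuclideanSpace ℝ (Fin n))
    (N' N : EuclideanSpace ℝ (Fin n) → ℝ)
    (hN' : ∀ v, N' v = ∑ i, |(inner ℝ (β i) v : ℝ)|)
    (hN : ∀ v, N v = N' v + |(inner ℝ γ v : ℝ)|) :
    ({v : EuclideanSpace ℝ (Fin n) | N v ≤ 1} ∩
        {v : EuclideanSpace ℝ (Fin n) | (inner ℝ γ v : ℝ) = 0} =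
      {v : EuclideanSpace ℝ (Fin n) | N' v ≤ 1} ∩
        {v : EuclideanSpace ℝ (Fin n) | (inner ℝ γ v : ℝ) = 0}) ∧
    ∀ v' ∈ Set.extremePoints ℝ {v : EuclideanSpace ℝ (Fin n) | N' v ≤ 1},
      (1 + |(inner ℝ γ v' : ℝ)|)⁻¹ • v' ∈
        Set.extremePoints ℝ {v : EuclideanSpace ℝ (Fin n) | N v ≤ 1} := by
  let E := EuclideanSpace ℝ (Fin n)
  let p : Seminorm ℝ E := ∑ i, (normSeminorm ℝ ℝ).comp (innerₗ E (β i))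
  let r : Seminorm ℝ E := (normSeminorm ℝ ℝ).comp (innerₗ E γ)
  have hp : N' = p := funext fun v => by simp [p, hN']
  have hr : ∀ v, r v = |(inner ℝ γ v : ℝ)| := fun v => by simp [r]
  refine ⟨?_, fun v' hv' => ?_⟩
  · ext v
    simp +contextual [hN]
  · simp only [hN, hp, ← hr] at hv' ⊢
    exact p.inv_one_add_smul_mem_extremePoints_add r hv'

/-- deflation step. Let `β₁, …, β_{k-1}` span `ℝ^n`, let `γ = β_k`,
`N' v = ∑_{i<k} |⟨β i, v⟩|` and `N = N' + |⟨γ, ·⟩|`, with unit balls `B'` and `B`.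
Then (a) `B ∩ γ^⊥ = B' ∩ γ^⊥`; (b) every extreme point `v'` of `B'` yields the
extreme point `v'/(1 + |⟨γ, v'⟩|)` of `B`. -/
theorem deflation_step_of_sum_abs_inner
    (n k : ℕ) (β : Fin k → EuclideanSpace ℝ (Fin n))
    (γ : EuclideanSpace ℝ (Fin n))
    (hspan : Submodule.span ℝ (Set.range β) = ⊤)
    (N' N : EuclideanSpace ℝ (Fin n) → ℝ)
    (hN' : ∀ v, N' v = ∑ i, |(inner ℝ (β i) v : ℝ)|)
    (hN : ∀ v, N v = N' v + |(inner ℝ γ v : ℝ)|) :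
    ({v : EuclideanSpace ℝ (Fin n) | N v ≤ 1} ∩
        {v : EuclideanSpace ℝ (Fin n) | (inner ℝ γ v : ℝ) = 0} =
      {v : EuclideanSpace ℝ (Fin n) | N' v ≤ 1} ∩
        {v : EuclideanSpace ℝ (Fin n) | (inner ℝ γ v : ℝ) = 0}) ∧
    ∀ v' ∈ Set.extremePoints ℝ {v : EuclideanSpace ℝ (Fin n) | N' v ≤ 1},
      (1 + |(inner ℝ γ v' : ℝ)|)⁻¹ • v' ∈
        Set.extremePoints ℝ {v : EuclideanSpace ℝ (Fin n) | N v ≤ 1} :=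
  deflation_step_of_sum_abs_inner_general n k β γ N' N hN' hN
end

section
/- Let a, b, c, d, e, f ∈ ℝ and define F : ℝ³ → ℝ by F(x, y, z) = a|x + y| + b|x + z| + c|y + z| + d|x − y| + e|x − z| + f|y − z|. If F takes the value 1 at each of the six points (1/4, 0, 0), (0, 1/4, 0), (1/6, 1/6, 1/6), (1/6, 1/6, −1/6), (1/6, −1/6, 1/6), (1/6, −1/6, −1/6), then a = b = c = d = e = f = 1; consequently F(0, 0, t) = 4|t| for all t, so F(0, 0, ε) = 1 if and only if |ε| = 1/4. -/
/-- if
`F(x,y,z) = a|x+y| + b|x+z| + c|y+z| + d|x−y| + e|x−z| + f|y−z|`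
takes value `1` at the six listed points, then `a = b = c = d = e = f = 1`;
consequently `F(0,0,t) = 4|t|`, so `F(0,0,ε) = 1 ↔ |ε| = 1/4`. -/
theorem coefficients_forced_by_vertices
    (a b c d e f : ℝ) (F : ℝ → ℝ → ℝ → ℝ)
    (hF : ∀ x y z : ℝ, F x y z =
      a * |x + y| + b * |x + z| + c * |y + z| +
        d * |x - y| + e * |x - z| + f * |y - z|)
    (h1 : F (1/4) 0 0 = 1) (h2 : F 0 (1/4) 0 = 1)
    (h3 : F (1/6) (1/6) (1/6) = 1) (h4 : F (1/6) (1/6) (-(1/6)) = 1)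
    (h5 : F (1/6) (-(1/6)) (1/6) = 1) (h6 : F (1/6) (-(1/6)) (-(1/6)) = 1) :
    (a = 1 ∧ b = 1 ∧ c = 1 ∧ d = 1 ∧ e = 1 ∧ f = 1) ∧
    (∀ t : ℝ, F 0 0 t = 4 * |t|) ∧
    (∀ ε : ℝ, F 0 0 ε = 1 ↔ |ε| = 1/4) := by
  rw [hF] at h1 h2 h3 h4 h5 h6
  norm_num [abs_of_nonneg, abs_of_nonpos] at h1 h2 h3 h4 h5 h6
  obtain ⟨ha, hb, hc, hd, he, hf⟩ : a = 1 ∧ b = 1 ∧ c = 1 ∧ d = 1 ∧ e = 1 ∧ f = 1 := by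
    refine ⟨?_, ?_, ?_, ?_, ?_, ?_⟩ <;> linarith
  subst ha hb hc hd he hf
  refine ⟨⟨rfl, rfl, rfl, rfl, rfl, rfl⟩, ?_, ?_⟩
  · intro t
    rw [hF]
    have e1 : (0:ℝ) + t = t := by ring
    have e2 : (0:ℝ) - t = -t := by ring
    rw [e1, e2, abs_neg]
    simp
    ring
  · intro ε
    rw [hF]
    constructor <;> intro h
    · have h0 : |0 + ε| = |ε| := by norm_num
      have h0' : |0 - ε| = |ε| := by rw [abs_sub_comm]; norm_num
      rw [h0, h0'] at h
      simp at h
      linarith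
    · rw [show (0:ℝ)+ε = ε by ring, show (0:ℝ)-ε = -ε by ring, abs_neg]
      simp [h]
      norm_num [h]
end
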